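/- In a complete graph K_n with nondecreasing thresholds t(1) ≤ ... ≤ t(n) satisfying t(i) ≤ i + k - 1 for all i, the link vector assigning s(i) = max(0, t(i) - i + 1) links to each node i is a pervading link vector; moreover node i is activated in or before round i. -/
import Mathlib


open Finset
open scoped Classical

/-- Threshold activation process: `act G t s j` is the set of nodes active at step `j`,
given link vector `s` (partial incentives from external influencers). -/
noncomputable def act {V : Type*} [Fintype V] (G : SimpleGraph V) (t s : V → ℕ) :
    ℕ → Finset V
  | 0 => Finset.univ.filter (fun v => t v ≤ s v)
  | (j+1) => act G t s j ∪ Finset.univ.filter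
      (fun v => t v ≤ s v + ((act G t s j).filter (fun u => G.Adj u v)).card)

/-- A link vector `s` is pervading for `(G, t)` with `k` external influencers if each node
receives at most `k` links and the process eventually activates every node. -/
def Pervading {V : Type*} [Fintype V] (G : SimpleGraph V) (t s : V → ℕ) (k : ℕ) : Prop :=
  (∀ v, s v ≤ k) ∧ ∃ j, act G t s j = Finset.univ

lemma act_mono {V : Type*} [Fintype V] (G : SimpleGraph V) (t s : V → ℕ) :
    Monotone (act G t s) := by
  apply monotone_nat_of_le_succ
  intro j
  show act G t s j ⊆ act G t s (j + 1)
  rw [show act G t s (j + 1) = act G t s j ∪ Finset.univ.filter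
      (fun v => t v ≤ s v + ((act G t s j).filter (fun u => G.Adj u v)).card) from rfl]
  exact Finset.subset_union_left

theorem clique_greedy_pervades (n k : ℕ) (t : Fin n → ℕ) (hmono : Monotone t)
    (hfeas : ∀ i : Fin n, t i ≤ i.val + k) :
    (∀ i : Fin n, i ∈ act (⊤ : SimpleGraph (Fin n)) t (fun j => t j - j.val) i.val) ∧
      Pervading (⊤ : SimpleGraph (Fin n)) t (fun j => t j - j.val) k := by
  set s : Fin n → ℕ := fun j => t j - j.val with hs
  have key : ∀ m : ℕ, ∀ i : Fin n, i.val = m → i ∈ act (⊤ : SimpleGraph (Fin n)) t s m := by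
    intro m
    induction m using Nat.strong_induction_on with
    | _ m ih =>
      intro i him
      match m, him with
      | 0, him =>
        show i ∈ Finset.univ.filter (fun v => t v ≤ s v)
        simp only [Finset.mem_filter, Finset.mem_univ, true_and, hs]
        rw [him]
        simp
      | (m'+1), him =>
        rw [act]
        simp only [Finset.mem_union]
        right
        simp only [Finset.mem_filter, Finset.mem_univ, true_and,
          Finset.filter_congr_decidable]
        have hsub : Finset.Iio i ⊆ (act (⊤ : SimpleGraph (Fin n)) t s m').filter
            (fun u => (⊤ : SimpleGraph (Fin n)).Adj u i) := by
          intro j hj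
          rw [Finset.mem_Iio] at hj
          have hjv : j.val < m' + 1 := him ▸ (Fin.lt_def.mp hj)
          refine Finset.mem_filter.mpr ⟨?_, ?_⟩
          · exact act_mono _ _ _ (Nat.lt_succ_iff.mp hjv) (ih j.val hjv j rfl)
          · simp [SimpleGraph.top_adj]
            exact ne_of_lt hj
        have hcard : i.val ≤ ((act (⊤ : SimpleGraph (Fin n)) t s m').filter
            (fun u => (⊤ : SimpleGraph (Fin n)).Adj u i)).card := by
          have := Finset.card_le_card hsub
          rwa [Fin.card_Iio] at this
        have h1 : t i ≤ s i + i.val := by rw [hs]; exact le_tsub_add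
        refine h1.trans (Nat.add_le_add_left ?_ _)
        convert hcard using 2
        exact Finset.filter_congr_decidable _ _ _
  constructor
  · intro i; exact key i.val i rfl
  · refine ⟨fun v => ?_, n, ?_⟩
    · show t v - v.val ≤ k
      have := hfeas v
      omega
    · apply Finset.eq_univ_iff_forall.mpr
      intro i
      exact act_mono _ _ _ (le_of_lt i.isLt) (key i.val i rfl)
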